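/- Let x_1,...,x_N ∈ St(d,r), x̂ = (1/N)∑ x_i, and x̄ the induced arithmetic mean. If D² := ∑_i ‖x_i − x̄‖_F² ≤ N/2, then ∑_i ‖x_i − x̂‖_F² ≥ D² − (4r/N) D⁴. -/

import Mathlib

open Matrix BigOperators Finset

noncomputable def fnorm {d r : ℕ} (A : Matrix (Fin d) (Fin r) ℝ) : ℝ :=
  Real.sqrt (∑ i, ∑ j, (A i j) ^ 2)

def ip {d r : ℕ} (A B : Matrix (Fin d) (Fin r) ℝ) : ℝ :=
  ∑ i, ∑ j, A i j * B i j

def Stiefel (d r : ℕ) : Set (Matrix (Fin d) (Fin r) ℝ) :=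
  {x | xᵀ * x = 1}

/-!
Write `S = ∑ xᵢ` and `M = x̄ᵀ S`. Comparing `x̄` with the competitors `G x̄`, `G` a Givens rotation
of `ℝᵈ`, shows that `S x̄ᵀ` is symmetric; hence `S = x̄ M` with `M` symmetric, and
`‖S‖² = tr (M²)`. Both sides are then functions of `M`: `D² = 2 (N r - tr M)` and
`∑ ‖xᵢ - x̂‖² = N r - tr (M²) / N`. Since `vᵀ M v = ∑ ⟨x̄ v, xᵢ v⟩ ≤ N ‖v‖²`, the matrix
`A = N - M` is positive semidefinite, and `tr (A²) ≤ (tr A)² = D⁴ / 4` rearranges to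
`∑ ‖xᵢ - x̂‖² ≥ D² - D⁴ / (4 N)`.
-/

section Rotation

variable {n : Type*} [Fintype n] [DecidableEq n]

lemma eq_zero_of_forall_circle_le {a b : ℝ}
    (h : ∀ c s : ℝ, c ^ 2 + s ^ 2 = 1 → (c - 1) * a + s * b ≤ 0) : b = 0 := by
  by_contra hb
  set ρ := √(a ^ 2 + b ^ 2)
  have hρ : 0 < ρ := Real.sqrt_pos.2 (by positivity)
  have hρsq : ρ ^ 2 = a ^ 2 + b ^ 2 := Real.sq_sqrt (by positivity)
  have key := h (a / ρ) (b / ρ) (by field_simp; linarith)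
  have hρa : ρ ≤ a := by
    field_simp at key
    nlinarith
  nlinarith [mul_self_pos.2 hb]

/-- The rotation with cosine `c` and sine `s` in the coordinate plane spanned by `i` and `k`. -/
def givens (i k : n) (c s : ℝ) : Matrix n n ℝ :=
  1 + (c - 1) • (single i i 1 + single k k 1) + s • (single k i 1 - single i k 1)

lemma givens_transpose_mul_self {i k : n} (hik : i ≠ k) {c s : ℝ} (hcs : c ^ 2 + s ^ 2 = 1) :
    (givens i k c s)ᵀ * givens i k c s = 1 := by
  -- `P` projects onto the plane of `i, k` and `J` is the quarter turn in it.
  obtain ⟨P, hP⟩ : ∃ P : Matrix n n ℝ, P = single i i 1 + single k k 1 := ⟨_, rfl⟩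
  obtain ⟨J, hJ⟩ : ∃ J : Matrix n n ℝ, J = single k i 1 - single i k 1 := ⟨_, rfl⟩
  have hPP : P * P = P := by simp [hP, add_mul, mul_add, hik, hik.symm]
  have hPJ : P * J = J := by simp [hP, hJ, add_mul, mul_sub, hik, hik.symm]
  have hJP : J * P = J := by simp [hP, hJ, sub_mul, mul_add, hik, hik.symm]; abel
  have hJJ : J * J = -P := by simp [hP, hJ, sub_mul, mul_sub, hik, hik.symm]; abel
  have hPt : Pᵀ = P := by simp [hP, transpose_single]
  have hJt : Jᵀ = -J := by simp [hJ, transpose_single]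
  rw [givens, ← hP, ← hJ]
  simp only [transpose_add, transpose_smul, transpose_one, hPt, hJt, add_mul, mul_add,
    smul_mul_assoc, mul_smul_comm, one_mul, mul_one, hPP, hPJ, hJP, hJJ, smul_neg, neg_mul]
  linear_combination (norm := module) hcs • P

lemma trace_transpose_givens_mul (i k : n) (c s : ℝ) (B : Matrix n n ℝ) :
    trace ((givens i k c s)ᵀ * B) =
      trace B + (c - 1) * (B i i + B k k) + s * (B k i - B i k) := by
  simp [givens, transpose_single, add_mul, sub_mul, trace_single_mul]
  ring

lemma isSymm_of_forall_trace_transpose_mul_le {B : Matrix n n ℝ}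
    (h : ∀ G : Matrix n n ℝ, Gᵀ * G = 1 → trace (Gᵀ * B) ≤ trace B) : B.IsSymm := by
  refine IsSymm.ext_iff.2 fun i k => ?_
  rcases eq_or_ne i k with rfl | hik
  · rfl
  have := eq_zero_of_forall_circle_le (a := B i i + B k k) (b := B k i - B i k)
    fun c s hcs => by
      have := h _ (givens_transpose_mul_self hik hcs)
      rw [trace_transpose_givens_mul] at this
      linarith
  linarith

end Rotation

lemma Matrix.PosSemidef.trace_mul_self_le_sq {n : Type*} [Fintype n] {A : Matrix n n ℝ}
    (hA : A.PosSemidef) : trace (A * A) ≤ trace A ^ 2 := by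
  classical
  have minor (a b : n) : A a b * A b a ≤ A a a * A b b := by
    have := (hA.submatrix ![a, b]).det_nonneg
    rw [det_fin_two] at this
    simpa [sub_nonneg] using this
  calc trace (A * A) = ∑ a, ∑ b, A a b * A b a := by simp [trace, mul_apply]
    _ ≤ ∑ a, ∑ b, A a a * A b b := sum_le_sum fun a _ => sum_le_sum fun b _ => minor a b
    _ = trace A ^ 2 := by simp [trace, sq, Finset.sum_mul_sum]

section Stiefel

variable {d r : ℕ}

lemma Stiefel.transpose_mul_self {x : Matrix (Fin d) (Fin r) ℝ} (hx : x ∈ Stiefel d r) :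
    xᵀ * x = 1 :=
  hx

lemma ip_eq_trace (A B : Matrix (Fin d) (Fin r) ℝ) : ip A B = trace (Aᵀ * B) := by
  simp only [ip, trace, Matrix.diag, mul_apply, transpose_apply]
  exact sum_comm

lemma fnorm_sq (A : Matrix (Fin d) (Fin r) ℝ) : fnorm A ^ 2 = trace (Aᵀ * A) := by
  rw [fnorm, Real.sq_sqrt (by positivity), ← ip_eq_trace]
  simp [ip, sq]

lemma fnorm_sub_sq_of_mem_stiefel {x : Matrix (Fin d) (Fin r) ℝ} (hx : x ∈ Stiefel d r)
    (y : Matrix (Fin d) (Fin r) ℝ) :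
    fnorm (x - y) ^ 2 = r - 2 * trace (xᵀ * y) + trace (yᵀ * y) := by
  have hyx : trace (yᵀ * x) = trace (xᵀ * y) := by
    rw [← trace_transpose, transpose_mul, transpose_transpose]
  rw [fnorm_sq, transpose_sub, Matrix.sub_mul, Matrix.mul_sub, Matrix.mul_sub, trace_sub,
    trace_sub, trace_sub, Stiefel.transpose_mul_self hx, trace_one, Fintype.card_fin, hyx]
  ring

lemma sum_fnorm_sub_sq_of_mem_stiefel {ι : Type*} [Fintype ι] {x : ι → Matrix (Fin d) (Fin r) ℝ}
    (hx : ∀ τ, x τ ∈ Stiefel d r) (y : Matrix (Fin d) (Fin r) ℝ) :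
    ∑ τ, fnorm (x τ - y) ^ 2 =
      Fintype.card ι * r - 2 * trace ((∑ τ, x τ)ᵀ * y) + Fintype.card ι * trace (yᵀ * y) := by
  have hsum : ∑ τ, trace ((x τ)ᵀ * y) = trace ((∑ τ, x τ)ᵀ * y) := by
    rw [transpose_sum, Matrix.sum_mul, trace_sum]
  simp only [fnorm_sub_sq_of_mem_stiefel (hx _), sum_add_distrib, sum_sub_distrib, ← mul_sum,
    hsum, sum_const, card_univ, nsmul_eq_mul]

lemma Stiefel.mul_mem {G : Matrix (Fin d) (Fin d) ℝ} (hG : Gᵀ * G = 1)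
    {x : Matrix (Fin d) (Fin r) ℝ} (hx : x ∈ Stiefel d r) : G * x ∈ Stiefel d r := by
  change (G * x)ᵀ * (G * x) = 1
  rwa [transpose_mul, Matrix.mul_assoc, ← Matrix.mul_assoc Gᵀ, hG, Matrix.one_mul]

lemma Stiefel.mulVec_dotProduct_mulVec {x : Matrix (Fin d) (Fin r) ℝ} (hx : x ∈ Stiefel d r)
    (v : Fin r → ℝ) : (x *ᵥ v) ⬝ᵥ (x *ᵥ v) = v ⬝ᵥ v := by
  rw [dotProduct_mulVec, ← vecMul_transpose, vecMul_vecMul, Stiefel.transpose_mul_self hx,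
    vecMul_one]

lemma Stiefel.dotProduct_transpose_mul_mulVec_le {x y : Matrix (Fin d) (Fin r) ℝ}
    (hx : x ∈ Stiefel d r) (hy : y ∈ Stiefel d r) (v : Fin r → ℝ) :
    v ⬝ᵥ ((xᵀ * y) *ᵥ v) ≤ v ⬝ᵥ v := by
  have hxy : v ⬝ᵥ ((xᵀ * y) *ᵥ v) = (x *ᵥ v) ⬝ᵥ (y *ᵥ v) := by
    rw [← mulVec_mulVec, dotProduct_mulVec, vecMul_transpose]
  have hnonneg : 0 ≤ (x *ᵥ v - y *ᵥ v) ⬝ᵥ (x *ᵥ v - y *ᵥ v) :=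
    sum_nonneg fun _ _ => mul_self_nonneg _
  simp only [sub_dotProduct, dotProduct_sub, Stiefel.mulVec_dotProduct_mulVec hx,
    Stiefel.mulVec_dotProduct_mulVec hy, dotProduct_comm (y *ᵥ v)] at hnonneg
  linarith

end Stiefel

section Maximizer

variable {d r : ℕ} {S xbar : Matrix (Fin d) (Fin r) ℝ}

lemma isSymm_mul_transpose_of_isMax (hmem : xbar ∈ Stiefel d r)
    (hmax : ∀ y ∈ Stiefel d r, ip y S ≤ ip xbar S) : (S * xbarᵀ).IsSymm := by
  refine isSymm_of_forall_trace_transpose_mul_le fun G hG => ?_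
  have := hmax _ (Stiefel.mul_mem hG hmem)
  rwa [ip_eq_trace, ip_eq_trace, transpose_mul, Matrix.mul_assoc, trace_mul_comm,
    Matrix.mul_assoc, trace_mul_comm xbarᵀ] at this

lemma isSymm_transpose_mul_of_isMax (hmem : xbar ∈ Stiefel d r)
    (hmax : ∀ y ∈ Stiefel d r, ip y S ≤ ip xbar S) : (xbarᵀ * S).IsSymm := by
  have h := congr_arg (fun B => xbarᵀ * B * xbar) (isSymm_mul_transpose_of_isMax hmem hmax).eq
  simp only [transpose_mul, transpose_transpose, Matrix.mul_assoc] at h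
  rw [← Matrix.mul_assoc xbarᵀ xbar, Stiefel.transpose_mul_self hmem, Matrix.one_mul,
    Matrix.mul_one] at h
  rwa [IsSymm, transpose_mul, transpose_transpose]

lemma eq_mul_transpose_mul_of_isMax (hmem : xbar ∈ Stiefel d r)
    (hmax : ∀ y ∈ Stiefel d r, ip y S ≤ ip xbar S) : S = xbar * (xbarᵀ * S) := by
  calc S = S * xbarᵀ * xbar := by
        rw [Matrix.mul_assoc, Stiefel.transpose_mul_self hmem, Matrix.mul_one]
    _ = (S * xbarᵀ)ᵀ * xbar := by rw [(isSymm_mul_transpose_of_isMax hmem hmax).eq]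
    _ = xbar * (xbarᵀ * S)ᵀ := by
        rw [transpose_mul, transpose_mul, transpose_transpose, Matrix.mul_assoc]
    _ = xbar * (xbarᵀ * S) := by rw [(isSymm_transpose_mul_of_isMax hmem hmax).eq]

end Maximizer

section Bound

variable {ι : Type*} [Fintype ι] {d r : ℕ}

lemma posSemidef_card_smul_one_sub_transpose_mul_sum {x : ι → Matrix (Fin d) (Fin r) ℝ}
    (hx : ∀ τ, x τ ∈ Stiefel d r) {y : Matrix (Fin d) (Fin r) ℝ} (hy : y ∈ Stiefel d r)
    (hsymm : (yᵀ * ∑ τ, x τ).IsSymm) :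
    ((Fintype.card ι : ℝ) • 1 - yᵀ * ∑ τ, x τ).PosSemidef := by
  refine PosSemidef.of_dotProduct_mulVec_nonneg
    (isHermitian_iff_isSymm.2 ((isSymm_one.smul _).sub hsymm)) fun v => ?_
  have hle : v ⬝ᵥ ((yᵀ * ∑ τ, x τ) *ᵥ v) ≤ Fintype.card ι * (v ⬝ᵥ v) := by
    rw [Matrix.mul_sum, sum_mulVec, dotProduct_sum]
    refine (sum_le_sum fun τ _ => Stiefel.dotProduct_transpose_mul_mulVec_le hy (hx τ) v).trans ?_
    simp
  simp only [star_trivial, sub_mulVec, smul_mulVec, one_mulVec, dotProduct_sub, dotProduct_smul,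
    smul_eq_mul]
  linarith

theorem le_sum_fnorm_sub_mean_sq [Nonempty ι] {x : ι → Matrix (Fin d) (Fin r) ℝ}
    (hx : ∀ τ, x τ ∈ Stiefel d r) {xbar : Matrix (Fin d) (Fin r) ℝ} (hmem : xbar ∈ Stiefel d r)
    (hmax : ∀ y ∈ Stiefel d r, ip y (∑ τ, x τ) ≤ ip xbar (∑ τ, x τ)) :
    ∑ τ, fnorm (x τ - xbar) ^ 2 - (∑ τ, fnorm (x τ - xbar) ^ 2) ^ 2 / (4 * (Fintype.card ι : ℝ)) ≤
      ∑ τ, fnorm (x τ - (Fintype.card ι : ℝ)⁻¹ • ∑ τ, x τ) ^ 2 := by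
  set N : ℝ := (Fintype.card ι : ℝ) with hNdef
  have hN : 0 < N := by simp [N, Fintype.card_pos]
  set S := ∑ τ, x τ with hSdef
  set M := xbarᵀ * S
  have hM : M.IsSymm := isSymm_transpose_mul_of_isMax hmem hmax
  have hSS : trace (Sᵀ * S) = trace (M * M) := by
    conv_lhs => rw [eq_mul_transpose_mul_of_isMax hmem hmax]
    rw [transpose_mul, Matrix.mul_assoc, ← Matrix.mul_assoc xbarᵀ, Stiefel.transpose_mul_self hmem,
      Matrix.one_mul, hM.eq]
  have hD : ∑ τ, fnorm (x τ - xbar) ^ 2 = 2 * N * r - 2 * trace M := by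
    rw [sum_fnorm_sub_sq_of_mem_stiefel hx, Stiefel.transpose_mul_self hmem, trace_one,
      Fintype.card_fin, ← trace_transpose, transpose_mul, transpose_transpose]
    ring
  have hL : ∑ τ, fnorm (x τ - N⁻¹ • S) ^ 2 = N * r - trace (M * M) / N := by
    rw [sum_fnorm_sub_sq_of_mem_stiefel hx, ← hSdef, ← hNdef]
    simp only [transpose_smul, Matrix.mul_smul, Matrix.smul_mul, trace_smul, smul_eq_mul, hSS]
    field_simp
    ring
  have hA : trace (M * M) ≤ (N * r - trace M) ^ 2 - N ^ 2 * r + 2 * N * trace M := by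
    have hPSD : (N • 1 - M).PosSemidef := posSemidef_card_smul_one_sub_transpose_mul_sum hx hmem hM
    have := hPSD.trace_mul_self_le_sq
    simp only [sub_mul, mul_sub, Matrix.smul_mul, Matrix.mul_smul, Matrix.one_mul, Matrix.mul_one,
      smul_smul, trace_sub, trace_smul, trace_one, Fintype.card_fin, smul_eq_mul] at this
    linarith
  rw [hD, hL]
  field_simp
  nlinarith [hA]

end Bound

theorem stmt2_general {N d r : ℕ} (hN : 0 < N)
    (x : Fin N → Matrix (Fin d) (Fin r) ℝ) (hx : ∀ i, x i ∈ Stiefel d r)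
    (xhat : Matrix (Fin d) (Fin r) ℝ) (hxhat : xhat = ((N : ℝ))⁻¹ • ∑ i, x i)
    (xbar : Matrix (Fin d) (Fin r) ℝ) (hmem : xbar ∈ Stiefel d r)
    (hmax : ∀ y ∈ Stiefel d r, ip y (∑ i, x i) ≤ ip xbar (∑ i, x i)) :
    ∑ i, fnorm (x i - xhat) ^ 2 ≥
      (∑ i, fnorm (x i - xbar) ^ 2) -
        (4 * (r : ℝ) / (N : ℝ)) * (∑ i, fnorm (x i - xbar) ^ 2) ^ 2 := by
  obtain rfl | hr := Nat.eq_zero_or_pos r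
  · simp [fnorm]
  have : Nonempty (Fin N) := ⟨⟨0, hN⟩⟩
  have key := le_sum_fnorm_sub_mean_sq hx hmem hmax
  rw [Fintype.card_fin, ← hxhat] at key
  have hconst : (1 : ℝ) / (4 * N) ≤ 4 * r / N := by
    have hN' : (0 : ℝ) < N := by exact_mod_cast hN
    have hr' : (1 : ℝ) ≤ r := by exact_mod_cast hr
    rw [div_le_div_iff₀ (by positivity) hN']
    nlinarith
  have := mul_le_mul_of_nonneg_right hconst (sq_nonneg (∑ i, fnorm (x i - xbar) ^ 2))
  rw [one_div_mul_eq_div] at this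
  linarith

theorem stmt2 {N d r : ℕ} (hN : 0 < N)
    (x : Fin N → Matrix (Fin d) (Fin r) ℝ) (hx : ∀ i, x i ∈ Stiefel d r)
    (xhat : Matrix (Fin d) (Fin r) ℝ) (hxhat : xhat = ((N : ℝ))⁻¹ • ∑ i, x i)
    (xbar : Matrix (Fin d) (Fin r) ℝ) (hmem : xbar ∈ Stiefel d r)
    (hmax : ∀ y ∈ Stiefel d r, ip y (∑ i, x i) ≤ ip xbar (∑ i, x i))
    (hsum : ∑ i, fnorm (x i - xbar) ^ 2 ≤ (N : ℝ) / 2) :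
    ∑ i, fnorm (x i - xhat) ^ 2 ≥
      (∑ i, fnorm (x i - xbar) ^ 2) -
        (4 * (r : ℝ) / (N : ℝ)) * (∑ i, fnorm (x i - xbar) ^ 2) ^ 2 :=
  stmt2_general hN x hx xhat hxhat xbar hmem hmax
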